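/- Upper bound part of the K_{d+1} computation: for d ≥ 3 and any probability distribution μ on the edges of K_{d+1}, there exist three distinct vertex-bond cocircuits C₁*, C₂*, C₃* (the cuts separating a single vertex from the rest) satisfying the non-inclusion property and μ(C₁*) + μ(C₂*) + μ(C₃*) ≤ 6/(d+1). -/

import Mathlib

open Set
open SimpleGraph

variable {α V : Type*}

/-- The total `μ`-weight of a set. -/
noncomputable def wt (μ : α → ℝ) (X : Set α) : ℝ := ∑ᶠ x ∈ X, μ x

/-- The non-inclusion property for a triple of sets. -/
def NonIncl (C₁ C₂ C₃ : Set α) : Prop :=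
  ¬ C₁ ⊆ C₂ ∪ C₃ ∧ ¬ C₂ ⊆ C₁ ∪ C₃ ∧ ¬ C₃ ⊆ C₁ ∪ C₂

/-- The weighted 3-cosystole relative to a family `K` of "cocircuits":
the minimum total weight of a non-inclusion triple of members of `K`. -/
noncomputable def sys3wtP (μ : α → ℝ) (K : Set α → Prop) : ℝ :=
  sInf {s | ∃ C₁ C₂ C₃, K C₁ ∧ K C₂ ∧ K C₃ ∧ NonIncl C₁ C₂ C₃ ∧
    s = wt μ C₁ + wt μ C₂ + wt μ C₃}

/-- The 3-cosystole relative to a ground set `E` and a family `K` of "cocircuits":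
the maximum of the weighted 3-cosystole over probability distributions on `E`. -/
noncomputable def sys3P (E : Set α) (K : Set α → Prop) : ℝ :=
  sSup {t | ∃ μ : α → ℝ, (∀ e, 0 ≤ μ e) ∧ (∀ e ∉ E, μ e = 0) ∧ wt μ E = 1 ∧
    t = sys3wtP μ K}

/-- An edge cut of a graph: a set of edges whose deletion disconnects the graph. -/
def IsEdgeCut (G : SimpleGraph V) (C : Set (Sym2 V)) : Prop :=
  C ⊆ G.edgeSet ∧ ¬ (G.deleteEdges C).Connected

/-- A bond of a graph: a minimal edge cut. These are the cocircuits of the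
graphic (cycle) matroid of a connected graph. -/
def IsBond (G : SimpleGraph V) (C : Set (Sym2 V)) : Prop :=
  IsEdgeCut G C ∧ ∀ ⦃D⦄, IsEdgeCut G D → D ⊆ C → D = C

/-- The edge set of a cycle of a graph. These are the cocircuits of the
cographic matroid of the graph. -/
def IsCycleSet (G : SimpleGraph V) (C : Set (Sym2 V)) : Prop :=
  ∃ (v : V) (w : G.Walk v v), w.IsCycle ∧ C = {e | e ∈ w.edges}

/-- The vertex bond at `v`: the set of edges incident to `v`. -/
def vertexBond (G : SimpleGraph V) (v : V) : Set (Sym2 V) :=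
  {e ∈ G.edgeSet | v ∈ e}


section Helpers
variable {α V : Type*}

lemma wt_eq_sum [Fintype α] (μ : α → ℝ) (X : Set α) [Fintype X] :
    wt μ X = ∑ x ∈ X.toFinset, μ x := by
  rw [wt, ← finsum_mem_coe_finset, Set.coe_toFinset]

lemma card_mem_sym2 {n : ℕ} (e : Sym2 (Fin n)) (he : ¬ e.IsDiag) :
    (Finset.univ.filter (fun v => v ∈ e)).card = 2 := by
  induction e with
  | _ a b =>
    rw [Sym2.mk_isDiag_iff] at he
    have : Finset.univ.filter (fun v => v ∈ s(a, b)) = {a, b} := by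
      ext v; simp [Sym2.mem_iff]
    rw [this, Finset.card_insert_of_notMem (by simpa using he), Finset.card_singleton]

lemma sum_vertexBond {n : ℕ} (μ : Sym2 (Fin n) → ℝ) :
    ∑ v : Fin n, wt μ (vertexBond (completeGraph (Fin n)) v)
      = 2 * wt μ ((completeGraph (Fin n)).edgeSet) := by
  classical
  simp only [wt_eq_sum]
  have hb : ∀ v : Fin n, (vertexBond (completeGraph (Fin n)) v).toFinset
      = ((completeGraph (Fin n)).edgeSet.toFinset.filter (fun e => v ∈ e)) := by
    intro v; ext e; rw [Set.mem_toFinset]; simp [vertexBond]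
  calc ∑ v : Fin n, ∑ x ∈ (vertexBond (completeGraph (Fin n)) v).toFinset, μ x
      = ∑ v : Fin n, ∑ e ∈ (completeGraph (Fin n)).edgeSet.toFinset,
          if v ∈ e then μ e else 0 := by
        refine Finset.sum_congr rfl fun v _ => ?_
        rw [hb v, Finset.sum_filter]
    _ = ∑ e ∈ (completeGraph (Fin n)).edgeSet.toFinset,
          ∑ v : Fin n, if v ∈ e then μ e else 0 := Finset.sum_comm
    _ = ∑ e ∈ (completeGraph (Fin n)).edgeSet.toFinset, 2 * μ e := by
        refine Finset.sum_congr rfl fun e he => ?_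
        rw [← Finset.sum_filter, Finset.sum_const, card_mem_sym2 e (by
          simpa [completeGraph] using he), nsmul_eq_mul]
        norm_num
    _ = 2 * ∑ e ∈ (completeGraph (Fin n)).edgeSet.toFinset, μ e := by
        rw [Finset.mul_sum]

lemma isBond_vertexBond {n : ℕ} (hn : 2 ≤ n) (v : Fin n) :
    IsBond (completeGraph (Fin n)) (vertexBond (completeGraph (Fin n)) v) := by
  have hne : Nonempty (Fin n) := ⟨⟨0, by omega⟩⟩
  have hnt : Nontrivial (Fin n) := Fin.nontrivial_iff_two_le.mpr hn
  set G := completeGraph (Fin n) with hG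
  set C := vertexBond G v with hC
  have hCE : C ⊆ G.edgeSet := fun e he => he.1
  constructor
  · refine ⟨hCE, fun hc => ?_⟩
    obtain ⟨u, hu⟩ := exists_ne v
    obtain ⟨p⟩ := hc.preconnected v u
    cases p with
    | nil => exact hu rfl
    | cons h q =>
      rw [SimpleGraph.deleteEdges_adj] at h
      exact h.2 ⟨h.1, by simp [Sym2.mem_iff]⟩
  · intro D hD hDC
    by_contra hne'
    obtain ⟨e, heC, heD⟩ : ∃ e, e ∈ C ∧ e ∉ D := by
      rcases Set.exists_of_ssubset (ssubset_of_subset_of_ne hDC hne') with ⟨e, h1, h2⟩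
      exact ⟨e, h1, h2⟩
    obtain ⟨heE, hve⟩ := heC
    set u := Sym2.Mem.other hve with hu
    have hspec : s(v, u) = e := Sym2.other_spec hve
    have hadj : G.Adj v u := by rw [← SimpleGraph.mem_edgeSet, hspec]; exact heE
    have huv : u ≠ v := hadj.symm.ne
    apply hD.2
    have key : ∀ w : Fin n, (G.deleteEdges D).Reachable w u := by
      intro w
      by_cases hwu : w = u
      · rw [hwu]
      by_cases hwv : w = v
      · subst hwv
        refine SimpleGraph.Adj.reachable ?_
        rw [SimpleGraph.deleteEdges_adj]
        exact ⟨hadj, by rw [hspec]; exact heD⟩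
      · refine SimpleGraph.Adj.reachable ?_
        rw [SimpleGraph.deleteEdges_adj]
        refine ⟨by simp [hG, completeGraph, hwu], fun hmem => ?_⟩
        have := hDC hmem
        have hv : v ∈ s(w, u) := this.2
        rw [Sym2.mem_iff] at hv
        rcases hv with h | h
        · exact hwv h.symm
        · exact huv h.symm
    exact ⟨fun a b => (key a).trans (key b).symm⟩

lemma not_subset_vertexBond {n : ℕ} (hn : 4 ≤ n) (a b c : Fin n)
    (hab : a ≠ b) (hac : a ≠ c) :
    ¬ vertexBond (completeGraph (Fin n)) a ⊆
      vertexBond (completeGraph (Fin n)) b ∪ vertexBond (completeGraph (Fin n)) c := by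
  obtain ⟨u, hua, hub, huc⟩ : ∃ u : Fin n, u ≠ a ∧ u ≠ b ∧ u ≠ c := by
    by_contra h
    push_neg at h
    have hsub : (Finset.univ : Finset (Fin n)) ⊆ {a, b, c} := by
      intro u _
      simp only [Finset.mem_insert, Finset.mem_singleton]
      by_cases h1 : u = a
      · exact Or.inl h1
      by_cases h2 : u = b
      · exact Or.inr (Or.inl h2)
      · exact Or.inr (Or.inr (h u h1 h2))
    have := Finset.card_le_card hsub
    simp only [Finset.card_univ, Fintype.card_fin] at this
    have h3 : ({a, b, c} : Finset (Fin n)).card ≤ 3 :=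
      le_trans (Finset.card_insert_le _ _) (by
        simpa using Nat.add_le_add_right (Finset.card_insert_le b {c}) 1)
    omega
  intro hsub
  have hmem : s(a, u) ∈ vertexBond (completeGraph (Fin n)) a := by
    refine ⟨?_, by simp⟩
    rw [SimpleGraph.mem_edgeSet]
    exact fun h => hua h.symm
  rcases hsub hmem with h | h
  · rcases Sym2.mem_iff.mp h.2 with h' | h'
    · exact hab h'.symm
    · exact hub h'.symm
  · rcases Sym2.mem_iff.mp h.2 with h' | h'
    · exact hac h'.symm
    · exact huc h'.symm

lemma nonIncl_vertexBond {n : ℕ} (hn : 4 ≤ n) (a b c : Fin n)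
    (hab : a ≠ b) (hac : a ≠ c) (hbc : b ≠ c) :
    NonIncl (vertexBond (completeGraph (Fin n)) a) (vertexBond (completeGraph (Fin n)) b)
      (vertexBond (completeGraph (Fin n)) c) :=
  ⟨not_subset_vertexBond hn a b c hab hac,
   not_subset_vertexBond hn b a c hab.symm hbc,
   not_subset_vertexBond hn c a b hac.symm hbc.symm⟩

lemma exists_three_min {n : ℕ} (hn : 3 ≤ n) (f : Fin n → ℝ) :
    ∃ v₁ v₂ v₃ : Fin n, v₁ ≠ v₂ ∧ v₁ ≠ v₃ ∧ v₂ ≠ v₃ ∧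
      f v₁ ≤ f v₂ ∧ f v₂ ≤ f v₃ ∧
      ∀ w, w ≠ v₁ → w ≠ v₂ → w ≠ v₃ → f v₃ ≤ f w := by
  classical
  have h0 : (Finset.univ : Finset (Fin n)).Nonempty := by
    rw [← Finset.card_pos]; simp; omega
  obtain ⟨v₁, _, h1min⟩ := Finset.exists_min_image Finset.univ f h0
  have h1 : (Finset.univ.erase v₁).Nonempty := by
    rw [← Finset.card_pos, Finset.card_erase_of_mem (Finset.mem_univ _)]
    simp; omega
  obtain ⟨v₂, hv₂mem, h2min⟩ := Finset.exists_min_image _ f h1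
  have h2 : ((Finset.univ.erase v₁).erase v₂).Nonempty := by
    rw [← Finset.card_pos, Finset.card_erase_of_mem hv₂mem,
      Finset.card_erase_of_mem (Finset.mem_univ _)]
    simp; omega
  obtain ⟨v₃, hv₃mem, h3min⟩ := Finset.exists_min_image _ f h2
  have h21 : v₂ ≠ v₁ := Finset.ne_of_mem_erase hv₂mem
  have h32 : v₃ ≠ v₂ := Finset.ne_of_mem_erase hv₃mem
  have h31 : v₃ ≠ v₁ := Finset.ne_of_mem_erase (Finset.mem_of_mem_erase hv₃mem)
  refine ⟨v₁, v₂, v₃, h21.symm, h31.symm, h32.symm,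
    h1min v₂ (Finset.mem_univ _), h2min v₃ (Finset.mem_of_mem_erase hv₃mem),
    fun w hw1 hw2 hw3 => h3min w ?_⟩
  simp [hw1, hw2]

end Helpers


/-- Upper bound for `K_{d+1}`: for any probability distribution on the edges there are
three distinct vertex bonds with the non-inclusion property whose weights sum
to at most `6/(d+1)`. -/


theorem stmt4 (d : ℕ) (hd : 3 ≤ d) (μ : Sym2 (Fin (d + 1)) → ℝ)
    (hnn : ∀ e, 0 ≤ μ e) (hsupp : ∀ e ∉ (SimpleGraph.completeGraph (Fin (d + 1))).edgeSet, μ e = 0)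
    (hsum : wt μ (SimpleGraph.completeGraph (Fin (d + 1))).edgeSet = 1) :
    ∃ v₁ v₂ v₃ : Fin (d + 1), v₁ ≠ v₂ ∧ v₁ ≠ v₃ ∧ v₂ ≠ v₃ ∧
      IsBond (SimpleGraph.completeGraph (Fin (d + 1))) (vertexBond (SimpleGraph.completeGraph (Fin (d + 1))) v₁) ∧
      IsBond (SimpleGraph.completeGraph (Fin (d + 1))) (vertexBond (SimpleGraph.completeGraph (Fin (d + 1))) v₂) ∧
      IsBond (SimpleGraph.completeGraph (Fin (d + 1))) (vertexBond (SimpleGraph.completeGraph (Fin (d + 1))) v₃) ∧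
      NonIncl (vertexBond (SimpleGraph.completeGraph (Fin (d + 1))) v₁)
        (vertexBond (SimpleGraph.completeGraph (Fin (d + 1))) v₂)
        (vertexBond (SimpleGraph.completeGraph (Fin (d + 1))) v₃) ∧
      wt μ (vertexBond (SimpleGraph.completeGraph (Fin (d + 1))) v₁) +
        wt μ (vertexBond (SimpleGraph.completeGraph (Fin (d + 1))) v₂) +
        wt μ (vertexBond (SimpleGraph.completeGraph (Fin (d + 1))) v₃) ≤ 6 / (d + 1 : ℝ) := by
  classical
  set f : Fin (d + 1) → ℝ := fun v => wt μ (vertexBond (completeGraph (Fin (d + 1))) v) with hf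
  have hfnn : ∀ v, 0 ≤ f v := by
    intro v
    show 0 ≤ wt μ (vertexBond (completeGraph (Fin (d + 1))) v)
    rw [wt_eq_sum]
    exact Finset.sum_nonneg fun x _ => hnn x
  have hS : ∑ v : Fin (d + 1), f v = 2 := by
    rw [hf, sum_vertexBond, hsum]; norm_num
  obtain ⟨v₁, v₂, v₃, h12, h13, h23, hf12, hf23, hmin⟩ := exists_three_min (by omega) f
  refine ⟨v₁, v₂, v₃, h12, h13, h23,
    isBond_vertexBond (by omega) v₁, isBond_vertexBond (by omega) v₂,
    isBond_vertexBond (by omega) v₃, nonIncl_vertexBond (by omega) v₁ v₂ v₃ h12 h13 h23, ?_⟩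
  have hT : ({v₁, v₂, v₃} : Finset (Fin (d + 1))).card = 3 := by
    rw [Finset.card_insert_of_notMem (by simp [h12, h13]),
      Finset.card_insert_of_notMem (by simp [h23]), Finset.card_singleton]
  have hsplit : ∑ v ∈ (Finset.univ \ {v₁, v₂, v₃}), f v
      + ∑ v ∈ ({v₁, v₂, v₃} : Finset (Fin (d + 1))), f v = ∑ v : Fin (d + 1), f v :=
    Finset.sum_sdiff (Finset.subset_univ _)
  have hTsum : ∑ v ∈ ({v₁, v₂, v₃} : Finset (Fin (d + 1))), f v = f v₁ + f v₂ + f v₃ := by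
    rw [Finset.sum_insert (by simp [h12, h13]), Finset.sum_insert (by simp [h23]),
      Finset.sum_singleton]
    ring
  have hrest : ((d : ℝ) - 2) * f v₃ ≤ ∑ v ∈ (Finset.univ \ {v₁, v₂, v₃}), f v := by
    have hcard : (Finset.univ \ ({v₁, v₂, v₃} : Finset (Fin (d + 1)))).card = d - 2 := by
      rw [Finset.card_sdiff_of_subset (Finset.subset_univ _), hT]
      simp only [Finset.card_univ, Fintype.card_fin]
      omega
    have := Finset.card_nsmul_le_sum (Finset.univ \ ({v₁, v₂, v₃} : Finset (Fin (d + 1))))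
      f (f v₃) (fun w hw => by
        simp only [Finset.mem_sdiff, Finset.mem_insert, Finset.mem_singleton] at hw
        push_neg at hw
        exact hmin w hw.2.1 hw.2.2.1 hw.2.2.2)
    rw [hcard, nsmul_eq_mul] at this
    have hc : ((d - 2 : ℕ) : ℝ) = (d : ℝ) - 2 := by
      have h2 : (2 : ℕ) ≤ d := by omega
      push_cast [Nat.cast_sub h2]; ring
    rwa [hc] at this
  have hbound : f v₁ + f v₂ + f v₃ + ((d : ℝ) - 2) * f v₃ ≤ 2 := by
    calc f v₁ + f v₂ + f v₃ + ((d : ℝ) - 2) * f v₃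
        ≤ f v₁ + f v₂ + f v₃ + ∑ v ∈ (Finset.univ \ {v₁, v₂, v₃}), f v := by linarith
      _ = ∑ v : Fin (d + 1), f v := by rw [← hsplit, hTsum]; ring
      _ = 2 := hS
  have hdpos : (0 : ℝ) < (d : ℝ) + 1 := by positivity
  show f v₁ + f v₂ + f v₃ ≤ 6 / ((d : ℝ) + 1)
  rw [le_div_iff₀ hdpos]
  have hd3 : (3 : ℝ) ≤ (d : ℝ) := by exact_mod_cast hd
  nlinarith [mul_nonneg (by linarith : (0:ℝ) ≤ (d:ℝ) - 2) (by linarith : (0:ℝ) ≤ f v₃ - f v₁),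
    mul_nonneg (by linarith : (0:ℝ) ≤ (d:ℝ) - 2) (by linarith : (0:ℝ) ≤ f v₃ - f v₂),
    hfnn v₁, hfnn v₂, hfnn v₃]
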